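/- Let f_t = a + d·1_{t ≥ θ+1} with 1 ≤ θ ≤ n−1 and d ≠ 0. Then the function k ↦ |T_{0,k,n}(f)| over k ∈ {1,...,n−1} attains its unique maximum at k = θ; i.e., |T_{0,k,n}(f)| < |T_{0,θ,n}(f)| for every k ≠ θ. -/

import Mathlib

open Finset

/-- Mean of `X` over the segment `(a, b]`. -/
noncomputable def segMean (X : ℕ → ℝ) (a b : ℕ) : ℝ :=
  (∑ t ∈ Finset.Ioc a b, X t) / ((b : ℝ) - (a : ℝ))

/-- Weighted CUSUM statistic `T_{s,k,e}(X)`. -/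
noncomputable def cusum (X : ℕ → ℝ) (s k e : ℕ) : ℝ :=
  Real.sqrt (((k : ℝ) - s) * ((e : ℝ) - k) / ((e : ℝ) - s)) *
    (segMean X s k - segMean X k e)

lemma sum_step (θ : ℕ) (a d : ℝ) (s e : ℕ) :
    ∑ t ∈ Finset.Ioc s e, (a + if θ + 1 ≤ t then d else 0)
      = ((e - s : ℕ) : ℝ) * a + ((e - max s θ : ℕ) : ℝ) * d := by
  rw [Finset.sum_add_distrib, Finset.sum_const, Nat.card_Ioc]
  have h : ∑ t ∈ Finset.Ioc s e, (if θ + 1 ≤ t then d else 0)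
      = ∑ t ∈ Finset.Ioc (max s θ) e, d := by
    rw [← Finset.sum_filter]
    congr 1
    ext t
    simp only [Finset.mem_filter, Finset.mem_Ioc, max_lt_iff]
    omega
  rw [h, Finset.sum_const, Nat.card_Ioc]
  simp [nsmul_eq_mul]
lemma cusum_eval (n θ k : ℕ) (a d : ℝ) (f : ℕ → ℝ)
    (hf : ∀ t, f t = a + if θ + 1 ≤ t then d else 0)
    (hk1 : 1 ≤ k) (hkn : k + 1 ≤ n) :
    cusum f 0 k n = Real.sqrt ((k : ℝ) * ((n : ℝ) - k) / n) *
      (((k - θ : ℕ) : ℝ) / k * d - ((n - max k θ : ℕ) : ℝ) / ((n : ℝ) - k) * d) := by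
  have hK : (0:ℝ) < (k:ℝ) := by exact_mod_cast hk1
  have hNK : (0:ℝ) < (n:ℝ) - k := by
    have : (k:ℝ) + 1 ≤ n := by exact_mod_cast hkn
    linarith
  have e1 : ∑ t ∈ Finset.Ioc 0 k, f t = (k : ℝ) * a + ((k - θ : ℕ) : ℝ) * d := by
    rw [Finset.sum_congr rfl (fun t _ => hf t), sum_step]
    simp
  have e2 : ∑ t ∈ Finset.Ioc k n, f t
      = ((n - k : ℕ) : ℝ) * a + ((n - max k θ : ℕ) : ℝ) * d := by
    rw [Finset.sum_congr rfl (fun t _ => hf t), sum_step]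
  have hnk : ((n - k : ℕ) : ℝ) = (n : ℝ) - k := by
    have : k ≤ n := by omega
    push_cast [this]; ring
  unfold cusum segMean
  rw [e1, e2, hnk]
  push_cast
  have hK' : (k:ℝ) ≠ 0 := hK.ne'
  have hNK' : (n:ℝ) - k ≠ 0 := hNK.ne'
  rw [sub_zero, sub_zero]
  congr 1
  field_simp
  ring

/-- For a single mean shift at θ, the map k ↦ |T_{0,k,n}(f)| attains its unique maximum at k = θ. -/
theorem cusum_unique_max (n θ : ℕ) (hθ1 : 1 ≤ θ) (hθn : θ ≤ n - 1)
    (a d : ℝ) (hd : d ≠ 0) (f : ℕ → ℝ)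
    (hf : ∀ t, f t = a + if θ + 1 ≤ t then d else 0) :
    ∀ k, 1 ≤ k → k ≤ n - 1 → k ≠ θ → |cusum f 0 k n| < |cusum f 0 θ n| := by
  intro k hk1 hkn1 hkθ
  have hn : 2 ≤ n := by omega
  have hkn' : k + 1 ≤ n := by omega
  have hθn' : θ + 1 ≤ n := by omega
  have hN : (0:ℝ) < n := by positivity
  have hK : (0:ℝ) < k := by exact_mod_cast hk1
  have hΘ : (0:ℝ) < θ := by exact_mod_cast hθ1
  have hNK : (0:ℝ) < (n:ℝ) - k := by
    have : (k:ℝ) + 1 ≤ n := by exact_mod_cast hkn'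
    linarith
  have hNΘ : (0:ℝ) < (n:ℝ) - θ := by
    have : (θ:ℝ) + 1 ≤ n := by exact_mod_cast hθn'
    linarith
  have hqK : (0:ℝ) ≤ (k:ℝ) * ((n:ℝ) - k) / n := by positivity
  have hqΘ : (0:ℝ) ≤ (θ:ℝ) * ((n:ℝ) - θ) / n := by positivity
  have hsqK := Real.sq_sqrt hqK
  have hsqΘ := Real.sq_sqrt hqΘ
  have eθ' : cusum f 0 θ n = Real.sqrt ((θ:ℝ) * ((n:ℝ) - θ) / n) * (-d) := by
    rw [cusum_eval n θ θ a d f hf hθ1 hθn']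
    congr 1
    rw [max_self, Nat.sub_self, Nat.cast_sub (by omega : θ ≤ n)]
    push_cast
    field_simp
    ring
  have hRHS : (cusum f 0 θ n)^2 = (θ:ℝ) * ((n:ℝ) - θ) / n * d^2 := by
    rw [eθ', mul_pow, hsqΘ]; ring
  suffices h : (cusum f 0 k n)^2 < (cusum f 0 θ n)^2 by
    rw [← Real.sqrt_sq (abs_nonneg (cusum f 0 k n)),
        ← Real.sqrt_sq (abs_nonneg (cusum f 0 θ n))]
    exact Real.sqrt_lt_sqrt (by positivity) (by rwa [sq_abs, sq_abs])
  rw [hRHS]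
  rcases lt_or_gt_of_ne hkθ with hlt | hgt
  · -- k < θ
    have ek' : cusum f 0 k n = Real.sqrt ((k:ℝ) * ((n:ℝ) - k) / n) *
        (-(((n:ℝ) - θ) / ((n:ℝ) - k) * d)) := by
      rw [cusum_eval n θ k a d f hf hk1 hkn']
      congr 1
      rw [(by omega : k - θ = 0), (by omega : max k θ = θ),
          Nat.cast_sub (by omega : θ ≤ n)]
      push_cast
      ring
    rw [ek', mul_pow, hsqK]
    have hlt' : (k:ℝ) < θ := by exact_mod_cast hlt
    have key : (k:ℝ) * ((n:ℝ) - θ) < (θ:ℝ) * ((n:ℝ) - k) := by nlinarith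
    have hc : (0:ℝ) < ((n:ℝ) - θ) * d^2 / ((n:ℝ) * ((n:ℝ) - k)) := by positivity
    calc (k:ℝ) * ((n:ℝ) - k) / n * (-(((n:ℝ) - θ) / ((n:ℝ) - k) * d))^2
        = ((k:ℝ) * ((n:ℝ) - θ)) * (((n:ℝ) - θ) * d^2 / ((n:ℝ) * ((n:ℝ) - k))) := by
          field_simp
      _ < ((θ:ℝ) * ((n:ℝ) - k)) * (((n:ℝ) - θ) * d^2 / ((n:ℝ) * ((n:ℝ) - k))) :=
          mul_lt_mul_of_pos_right key hc
      _ = (θ:ℝ) * ((n:ℝ) - θ) / n * d^2 := by field_simp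
  · -- θ < k
    have ek' : cusum f 0 k n = Real.sqrt ((k:ℝ) * ((n:ℝ) - k) / n) *
        (-((θ:ℝ) / k * d)) := by
      rw [cusum_eval n θ k a d f hf hk1 hkn']
      congr 1
      rw [(by omega : max k θ = k), Nat.cast_sub (by omega : θ ≤ k),
          Nat.cast_sub (by omega : k ≤ n)]
      field_simp
      ring
    rw [ek', mul_pow, hsqK]
    have hgt' : (θ:ℝ) < k := by exact_mod_cast hgt
    have key : (θ:ℝ) * ((n:ℝ) - k) < ((n:ℝ) - θ) * k := by nlinarith
    have hc : (0:ℝ) < (θ:ℝ) * d^2 / ((n:ℝ) * k) := by positivity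
    calc (k:ℝ) * ((n:ℝ) - k) / n * (-((θ:ℝ) / k * d))^2
        = ((θ:ℝ) * ((n:ℝ) - k)) * ((θ:ℝ) * d^2 / ((n:ℝ) * k)) := by
          field_simp
      _ < (((n:ℝ) - θ) * k) * ((θ:ℝ) * d^2 / ((n:ℝ) * k)) :=
          mul_lt_mul_of_pos_right key hc
      _ = (θ:ℝ) * ((n:ℝ) - θ) / n * d^2 := by field_simp
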